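/- Let (M,d) be a metric space and μ a finite measure on M with μ(M) > 0 that is c-doubling for some c ≥ 1. Suppose the diameter of M equals Δ > 0 and is attained (there exist u, v ∈ M with d(u,v) = Δ, and d(p,q) ≤ Δ for all p,q ∈ M), and let α ≥ 1. Then for every point p ∈ M, μ(B̄(p, Δ·(α+2)/(8(α+1)))) ≤ (1 − 1/c²)·μ(M). -/

import Mathlib

/-!
Of the two endpoints of a diameter, one, say `w`, lies at distance at least `Δ/2` from `p`.
Since `(α+2)/(8(α+1)) < 1/4`, the ball around `p` is disjoint from `B̄(w, Δ/4)`, and two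
doublings from `B̄(w, Δ/4)` reach `B̄(w, Δ) = M`, so `B̄(w, Δ/4)` carries at least a
`c⁻²`-fraction of the mass.
-/

open MeasureTheory Metric
open scoped NNReal ENNReal

def IsDoublingWith {M : Type*} [PseudoMetricSpace M] [MeasurableSpace M]
    (μ : Measure M) (c : ℝ≥0) : Prop :=
  ∀ (x : M) (r : ℝ), 0 < r → μ (closedBall x (2 * r)) ≤ c * μ (closedBall x r)

theorem exists_half_dist_le_dist {M : Type*} [PseudoMetricSpace M] (p u v : M) :
    ∃ w, dist u v / 2 ≤ dist p w := by
  by_contra! h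
  have hu := h u
  have hv := h v
  have := dist_triangle_left u v p
  linarith

namespace IsDoublingWith

variable {M : Type*} [PseudoMetricSpace M] [MeasurableSpace M] {μ : Measure M} {c : ℝ≥0}

theorem measure_closedBall_two_pow_mul_le (hμ : IsDoublingWith μ c) (x : M) {r : ℝ}
    (hr : 0 < r) (n : ℕ) :
    μ (closedBall x (2 ^ n * r)) ≤ c ^ n * μ (closedBall x r) := by
  induction n with
  | zero => simp
  | succ n ih =>
    calc μ (closedBall x (2 ^ (n + 1) * r))
        = μ (closedBall x (2 * (2 ^ n * r))) := by ring_nf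
      _ ≤ c * μ (closedBall x (2 ^ n * r)) := hμ x _ (by positivity)
      _ ≤ c * (c ^ n * μ (closedBall x r)) := by gcongr
      _ = c ^ (n + 1) * μ (closedBall x r) := by ring

theorem inv_sq_mul_measure_univ_le (hμ : IsDoublingWith μ c) {Δ : ℝ} (hΔ : 0 < Δ) {w : M}
    (hdiam : ∀ q, dist q w ≤ Δ) :
    (c : ℝ≥0∞)⁻¹ ^ 2 * μ Set.univ ≤ μ (closedBall w (Δ / 4)) := by
  have hmass : μ Set.univ ≤ μ (closedBall w (Δ / 4)) * (c : ℝ≥0∞) ^ 2 :=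
    calc μ Set.univ = μ (closedBall w (2 ^ 2 * (Δ / 4))) := by
          rw [show (2 : ℝ) ^ 2 * (Δ / 4) = Δ by ring,
            Set.eq_univ_of_forall (s := closedBall w Δ) hdiam]
      _ ≤ (c : ℝ≥0∞) ^ 2 * μ (closedBall w (Δ / 4)) :=
          hμ.measure_closedBall_two_pow_mul_le w (by positivity) 2
      _ = μ (closedBall w (Δ / 4)) * (c : ℝ≥0∞) ^ 2 := mul_comm _ _
  rw [← ENNReal.inv_pow, mul_comm, ← div_eq_mul_inv]
  exact ENNReal.div_le_of_le_mul hmass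

end IsDoublingWith

theorem measure_le_one_sub_mul_univ_of_disjoint {Ω : Type*} [MeasurableSpace Ω]
    {μ : Measure Ω} [IsFiniteMeasure μ] {s t : Set Ω} {ε : ℝ≥0∞} (hst : Disjoint s t)
    (ht : MeasurableSet t) (hε : ε * μ Set.univ ≤ μ t) :
    μ s ≤ (1 - ε) * μ Set.univ :=
  calc μ s ≤ μ tᶜ := measure_mono hst.subset_compl_right
    _ = μ Set.univ - μ t := measure_compl ht (measure_ne_top μ t)
    _ ≤ μ Set.univ - ε * μ Set.univ := tsub_le_tsub_left hε _
    _ = (1 - ε) * μ Set.univ := by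
      rw [ENNReal.sub_mul fun _ _ => measure_ne_top μ _, one_mul]

theorem mul_div_lt_quarter {Δ α : ℝ} (hΔ : 0 < Δ) (hα : 0 < α) :
    Δ * (α + 2) / (8 * (α + 1)) < Δ / 4 := by
  rw [div_lt_div_iff₀ (by positivity) (by norm_num)]
  nlinarith

theorem stmt_7_general {M : Type*} [MetricSpace M] [MeasurableSpace M] [BorelSpace M]
    (μ : Measure M) [IsFiniteMeasure μ]
    (c : ℝ≥0)
    (hdbl : ∀ (x : M) (r : ℝ), 0 < r →
      μ (closedBall x (2 * r)) ≤ c * μ (closedBall x r))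
    (Δ : ℝ) (hΔ : 0 < Δ) (u v : M) (huv : dist u v = Δ)
    (hdiam : ∀ p q : M, dist p q ≤ Δ) (α : ℝ) (hα : 1 ≤ α)
    (p : M) :
    μ (closedBall p (Δ * (α + 2) / (8 * (α + 1)))) ≤
      (1 - ((c : ℝ≥0∞))⁻¹ ^ 2) * μ Set.univ := by
  obtain ⟨w, hw⟩ := exists_half_dist_le_dist p u v
  rw [huv] at hw
  have hdisj : Disjoint (closedBall p (Δ * (α + 2) / (8 * (α + 1)))) (closedBall w (Δ / 4)) :=
    closedBall_disjoint_closedBall (by linarith [mul_div_lt_quarter hΔ (by linarith : 0 < α)])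
  exact measure_le_one_sub_mul_univ_of_disjoint hdisj measurableSet_closedBall
    (IsDoublingWith.inv_sq_mul_measure_univ_le hdbl hΔ (hdiam · w))

theorem stmt_7 {M : Type*} [MetricSpace M] [MeasurableSpace M] [BorelSpace M]
    (μ : Measure M) [IsFiniteMeasure μ] (hpos : 0 < μ Set.univ)
    (c : ℝ≥0) (hc : 1 ≤ c)
    (hdbl : ∀ (x : M) (r : ℝ), 0 < r →
      μ (closedBall x (2 * r)) ≤ c * μ (closedBall x r))
    (Δ : ℝ) (hΔ : 0 < Δ) (u v : M) (huv : dist u v = Δ)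
    (hdiam : ∀ p q : M, dist p q ≤ Δ) (α : ℝ) (hα : 1 ≤ α)
    (p : M) :
    μ (closedBall p (Δ * (α + 2) / (8 * (α + 1)))) ≤
      (1 - ((c : ℝ≥0∞))⁻¹ ^ 2) * μ Set.univ :=
  stmt_7_general μ c hdbl Δ hΔ u v huv hdiam α hα p
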